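/- In the setting of the interlacing lemma, each zero η_k(c) of f_n(x) = p_n(x) + c q_n(x) is a strictly decreasing function of c > 0, and lim_{c→∞} η_k(c) = y_k for each k = 1, …, n. -/

import Mathlib

/-!
Evaluate `f = p + c q = (a + c b) ∏ (X - η_j(c))` at a point `t` with `y_i < t < x_i`: the sign of
`∏ (t - y_j)` is `(-1)^#{j > i}`, while the sign of `∏ (t - η_j(c))` tells on which side of `t` the
zero `η_i(c)` lies. At `t = η_i(c')` we get `(a + c b) ∏ (t - η_j(c)) = (c - c') b ∏ (t - y_j)`, which
forces `η_i(c) > η_i(c')` for `c < c'`. For fixed `t`, the term `c b ∏ (t - y_j)` dominates `f(t)`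
as `c → ∞`, which forces `η_i(c) < t` eventually.
-/

open Polynomial Filter Finset

section SignOfProduct

variable {ι : Type*} [Fintype ι] [DecidableEq ι] (z : ι → ℝ) (S : Finset ι) (t : ℝ)

lemma neg_one_pow_card_mul_prod_sub :
    (-1 : ℝ) ^ #S * ∏ j, (t - z j) = ∏ j, if j ∈ S then z j - t else t - z j := by
  rw [← prod_const, ← Fintype.prod_ite_mem, ← prod_mul_distrib]
  exact prod_congr rfl fun j _ => by split_ifs <;> ring

variable {z S t}

lemma neg_one_pow_card_mul_prod_sub_nonneg (hS : ∀ j ∈ S, t ≤ z j) (hSc : ∀ j ∉ S, z j ≤ t) :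
    0 ≤ (-1 : ℝ) ^ #S * ∏ j, (t - z j) := by
  rw [neg_one_pow_card_mul_prod_sub]
  refine prod_nonneg fun j _ => ?_
  split_ifs with hj
  exacts [sub_nonneg.2 (hS j hj), sub_nonneg.2 (hSc j hj)]

lemma neg_one_pow_card_mul_prod_sub_pos (hS : ∀ j ∈ S, t < z j) (hSc : ∀ j ∉ S, z j < t) :
    0 < (-1 : ℝ) ^ #S * ∏ j, (t - z j) := by
  rw [neg_one_pow_card_mul_prod_sub]
  refine prod_pos fun j _ => ?_
  split_ifs with hj
  exacts [sub_pos.2 (hS j hj), sub_pos.2 (hSc j hj)]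

end SignOfProduct

section Interlacing

variable {n : ℕ} {x y e : Fin n → ℝ} {i : Fin n} {t : ℝ}

lemma lt_of_interlace (hy : Monotone y)
    (hxy : ∀ i : Fin n, ∀ h : (i : ℕ) + 1 < n, x i < y ⟨(i : ℕ) + 1, h⟩) {i j : Fin n}
    (hij : i < j) : x i < y j :=
  (hxy i (by omega)).trans_le (hy (Fin.mk_le_of_le_val (by simpa using hij)))

lemma sign_prod_sub_lower_pos (hy : Monotone y) (hgap : ∀ i j, i < j → x i < y j)
    (hyt : y i < t) (htx : t < x i) : 0 < (-1 : ℝ) ^ #(Ioi i) * ∏ j, (t - y j) :=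
  neg_one_pow_card_mul_prod_sub_pos (fun j hj => htx.trans (hgap i j (mem_Ioi.1 hj)))
    fun _ hj => (hy (not_lt.1 (mem_Ioi.not.1 hj))).trans_lt hyt

lemma sign_prod_sub_nonneg_of_le (he : Monotone e) (hye : ∀ j, y j < e j)
    (hgap : ∀ i j, i < j → x i < y j) (hei : e i ≤ t) (htx : t < x i) :
    0 ≤ (-1 : ℝ) ^ #(Ioi i) * ∏ j, (t - e j) :=
  neg_one_pow_card_mul_prod_sub_nonneg
    (fun j hj => (htx.trans ((hgap i j (mem_Ioi.1 hj)).trans (hye j))).le)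
    fun _ hj => (he (not_lt.1 (mem_Ioi.not.1 hj))).trans hei

lemma sign_prod_sub_nonpos_of_ge (he : Monotone e) (hex : ∀ j, e j < x j)
    (hgap : ∀ i j, i < j → x i < y j) (hyt : y i < t) (hte : t ≤ e i) :
    (-1 : ℝ) ^ #(Ioi i) * ∏ j, (t - e j) ≤ 0 := by
  have hIci : 0 ≤ (-1 : ℝ) ^ #(Ici i) * ∏ j, (t - e j) :=
    neg_one_pow_card_mul_prod_sub_nonneg (fun j hj => hte.trans (he (mem_Ici.1 hj)))
      fun j hj => ((hex j).trans ((hgap j i (not_le.1 (mem_Ici.not.1 hj))).trans hyt)).le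
  rw [← Ioi_insert, card_insert_of_notMem notMem_Ioi_self, pow_succ] at hIci
  linarith

variable {a b : ℝ} {η : ℝ → Fin n → ℝ}

lemma interlacing_zero_strictAntiOn (ha : 0 < a) (hb : 0 < b) (hy : Monotone y)
    (hgap : ∀ i j, i < j → x i < y j)
    (hη : ∀ c, 0 < c → Monotone (η c) ∧ (∀ j, y j < η c j ∧ η c j < x j))
    (hf : ∀ c, 0 < c → ∀ t, a * ∏ j, (t - x j) + c * (b * ∏ j, (t - y j)) =
      (a + c * b) * ∏ j, (t - η c j)) (i : Fin n) :
    StrictAntiOn (fun c => η c i) (Set.Ioi 0) := by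
  intro c hc c' hc' hcc'
  obtain ⟨hmono, hbounds⟩ := hη c hc
  obtain ⟨hyt, htx⟩ := (hη c' hc').2 i
  set t := η c' i
  have hroot : ∏ j, (t - η c' j) = 0 := prod_eq_zero (mem_univ i) (sub_self t)
  -- subtracting the identities at `c` and `c'` eliminates `p(t)`
  have hdiff : (a + c * b) * ((-1) ^ #(Ioi i) * ∏ j, (t - η c j)) =
      (c - c') * b * ((-1) ^ #(Ioi i) * ∏ j, (t - y j)) := by
    linear_combination (-1 : ℝ) ^ #(Ioi i) * (hf c' hc' t - hf c hc t + hroot * (a + c' * b))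
  have hy_pos := sign_prod_sub_lower_pos hy hgap hyt htx
  by_contra! hle
  have hη_nonneg := sign_prod_sub_nonneg_of_le hmono (fun j => (hbounds j).1) hgap hle htx
  have hcb : 0 < a + c * b := by have := Set.mem_Ioi.1 hc; positivity
  linarith [mul_nonneg hcb.le hη_nonneg, mul_pos (mul_pos (sub_pos.2 hcc') hb) hy_pos]

lemma interlacing_zero_tendsto_atTop (ha : 0 < a) (hb : 0 < b) (hy : Monotone y) (hyx : ∀ i, y i < x i)
    (hgap : ∀ i j, i < j → x i < y j)
    (hη : ∀ c, 0 < c → Monotone (η c) ∧ (∀ j, y j < η c j ∧ η c j < x j))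
    (hf : ∀ c, 0 < c → ∀ t, a * ∏ j, (t - x j) + c * (b * ∏ j, (t - y j)) =
      (a + c * b) * ∏ j, (t - η c j)) (i : Fin n) :
    Tendsto (fun c => η c i) atTop (nhds (y i)) := by
  rw [tendsto_order]
  refine ⟨fun m hm => ?_, fun m hm => ?_⟩
  · filter_upwards [eventually_gt_atTop 0] with c hc using hm.trans ((hη c hc).2 i).1
  obtain ⟨t, hyt, htm⟩ := exists_between (lt_min hm (hyx i))
  set s : ℝ := (-1) ^ #(Ioi i)
  have hy_pos : 0 < b * (s * ∏ j, (t - y j)) :=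
    mul_pos hb (sign_prod_sub_lower_pos hy hgap hyt (htm.trans_le (min_le_right _ _)))
  have hgrow : Tendsto (fun c => s * (a * ∏ j, (t - x j)) + c * (b * (s * ∏ j, (t - y j))))
      atTop atTop :=
    tendsto_atTop_add_const_left _ _ (tendsto_id.atTop_mul_const hy_pos)
  filter_upwards [hgrow.eventually_gt_atTop 0, eventually_gt_atTop 0] with c hpos hc
  by_contra! hle
  have hη_nonpos := sign_prod_sub_nonpos_of_ge (hη c hc).1 (fun j => ((hη c hc).2 j).2) hgap hyt
    ((htm.trans_le (min_le_left _ _)).le.trans hle)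
  have hcb : 0 < a + c * b := by positivity
  have hsigned : s * (a * ∏ j, (t - x j)) + c * (b * (s * ∏ j, (t - y j))) =
      (a + c * b) * (s * ∏ j, (t - η c j)) := by
    linear_combination s * hf c hc t
  linarith [mul_nonpos_of_nonneg_of_nonpos hcb.le hη_nonpos]

end Interlacing

theorem interlacing_lemma_asymptotics_general (n : ℕ) (a b : ℝ) (ha : 0 < a) (hb : 0 < b)
    (x y : Fin n → ℝ) (hy : StrictMono y)
    (hyx : ∀ i, y i < x i)
    (hxy : ∀ i : Fin n, ∀ h : (i : ℕ) + 1 < n, x i < y ⟨(i : ℕ) + 1, h⟩)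
    (η : ℝ → Fin n → ℝ)
    (hη : ∀ c, 0 < c → StrictMono (η c) ∧ (∀ i, y i < η c i ∧ η c i < x i) ∧
      (C a * ∏ i, (X - C (x i))) + C c * (C b * ∏ i, (X - C (y i))) =
        C (a + c * b) * ∏ i, (X - C (η c i))) :
    ∀ i : Fin n, StrictAntiOn (fun c => η c i) (Set.Ioi (0 : ℝ)) ∧
      Tendsto (fun c => η c i) atTop (nhds (y i)) := by
  have hgap : ∀ i j, i < j → x i < y j := fun i j => lt_of_interlace hy.monotone hxy
  have hη' : ∀ c, 0 < c → Monotone (η c) ∧ (∀ j, y j < η c j ∧ η c j < x j) :=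
    fun c hc => ⟨(hη c hc).1.monotone, (hη c hc).2.1⟩
  have hf : ∀ c, 0 < c → ∀ t, a * ∏ j, (t - x j) + c * (b * ∏ j, (t - y j)) =
      (a + c * b) * ∏ j, (t - η c j) := fun c hc t => by
    simpa only [eval_add, eval_mul, eval_prod, eval_sub, eval_X, eval_C] using
      congrArg (eval t) (hη c hc).2.2
  exact fun i => ⟨interlacing_zero_strictAntiOn ha hb hy.monotone hgap hη' hf i,
    interlacing_zero_tendsto_atTop ha hb hy.monotone hyx hgap hη' hf i⟩

theorem interlacing_lemma_asymptotics (n : ℕ) (a b : ℝ) (ha : 0 < a) (hb : 0 < b)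
    (x y : Fin n → ℝ) (hx : StrictMono x) (hy : StrictMono y)
    (hyx : ∀ i, y i < x i)
    (hxy : ∀ i : Fin n, ∀ h : (i : ℕ) + 1 < n, x i < y ⟨(i : ℕ) + 1, h⟩)
    (η : ℝ → Fin n → ℝ)
    (hη : ∀ c, 0 < c → StrictMono (η c) ∧ (∀ i, y i < η c i ∧ η c i < x i) ∧
      (C a * ∏ i, (X - C (x i))) + C c * (C b * ∏ i, (X - C (y i))) =
        C (a + c * b) * ∏ i, (X - C (η c i))) :
    ∀ i : Fin n, StrictAntiOn (fun c => η c i) (Set.Ioi (0 : ℝ)) ∧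
      Tendsto (fun c => η c i) atTop (nhds (y i)) :=
  interlacing_lemma_asymptotics_general n a b ha hb x y hy hyx hxy η hη
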